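/- arXiv:2302.02062 — 14 statements merged into one kernel-verified Lean document; each statement's English description precedes it below -/
import Mathlib

section
/- Let V be a finite-dimensional real vector space equipped with a nondegenerate skew-symmetric bilinear form ω, let g be a finite-dimensional real vector space, let a : g → V be a linear map, and define μ : V → g* by μ(u)(v) := ω(a(v), u). Assume that the image of a is isotropic, i.e. ω(a(v), a(w)) = 0 for all v, w ∈ g. Then the radical of the restriction of ω to ker μ equals the image of a; that is, {u ∈ ker μ : ω(u, u') = 0 for all u' ∈ ker μ} = a(g). -/
/-! The zero level set `ker μ` is the `ω`-orthogonal `W = A^⊥` of the image `A = a(g)`, so the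
radical of `ω` restricted to `W` is `W ∩ W^⊥`. In finite dimension a nondegenerate reflexive form
satisfies `A^⊥⊥ = A`, hence `W ∩ W^⊥ = A^⊥ ∩ A`, which is `A` because `A` is isotropic. -/

open LinearMap (BilinForm)

namespace LinearMap.BilinForm

variable {R M G : Type*} [CommRing R] [AddCommGroup M] [Module R M] [AddCommGroup G] [Module R G]

theorem ker_flip_comp_eq_orthogonal_range (B : BilinForm R M) (a : G →ₗ[R] M) :
    ker (B ∘ₗ a).flip = B.orthogonal (range a) := by
  ext u
  simp only [mem_ker, mem_orthogonal_iff, mem_range, forall_exists_index, forall_apply_eq_imp_iff]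
  exact LinearMap.ext_iff

theorem IsRefl.mem_orthogonal_iff' {B : BilinForm R M} (hB : B.IsRefl) {N : Submodule R M}
    {m : M} : m ∈ B.orthogonal N ↔ ∀ n ∈ N, B m n = 0 :=
  forall₂_congr fun _ _ ↦ hB.eq_iff

variable {K V : Type*} [Field K] [AddCommGroup V] [Module K V] [FiniteDimensional K V]

theorem orthogonal_inf_orthogonal_orthogonal_of_le {B : BilinForm K V} (hB : B.Nondegenerate)
    (hB₀ : B.IsRefl) {N : Submodule K V} (hN : N ≤ B.orthogonal N) :
    B.orthogonal N ⊓ B.orthogonal (B.orthogonal N) = N := by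
  rw [orthogonal_orthogonal hB hB₀, inf_eq_right.mpr hN]

end LinearMap.BilinForm

open LinearMap LinearMap.BilinForm in
theorem radical_of_restriction_eq_image_general
    {V g : Type*} [AddCommGroup V] [Module ℝ V] [FiniteDimensional ℝ V]
    [AddCommGroup g] [Module ℝ g]
    (ω : V →ₗ[ℝ] V →ₗ[ℝ] ℝ)
    (hskew : ∀ u v : V, ω u v = - ω v u)
    (hnd : ∀ u : V, (∀ v : V, ω u v = 0) → u = 0)
    (a : g →ₗ[ℝ] V)
    (μ : V →ₗ[ℝ] Module.Dual ℝ g)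
    (hμ : ∀ (u : V) (v : g), μ u v = ω (a v) u)
    (hiso : ∀ v w : g, ω (a v) (a w) = 0) :
    {u : V | u ∈ LinearMap.ker μ ∧ ∀ u' ∈ LinearMap.ker μ, ω u u' = 0}
      = Set.range a := by
  have hrefl : ω.IsRefl := fun u v h ↦ by rw [hskew, h, neg_zero]
  have hω : ω.Nondegenerate := hrefl.nondegenerate_iff_separatingLeft.mpr hnd
  have hker : ker μ = BilinForm.orthogonal ω (range a) := by
    rw [← ker_flip_comp_eq_orthogonal_range]
    congr 1
    ext u v
    exact hμ u v
  have hA : range a ≤ BilinForm.orthogonal ω (range a) := by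
    rintro _ ⟨w, rfl⟩ _ ⟨v, rfl⟩
    exact hiso v w
  ext u
  rw [← coe_range, ← orthogonal_inf_orthogonal_orthogonal_of_le hω hrefl hA, ← hker]
  simp only [Set.mem_ofPred_eq, SetLike.mem_coe, Submodule.mem_inf,
    IsRefl.mem_orthogonal_iff' hrefl]

/-- Let `V` be a finite-dimensional real vector space equipped with a nondegenerate
skew-symmetric bilinear form `ω`, let `g` be a finite-dimensional real vector space,
let `a : g → V` be a linear map, and define `μ : V → g*` by `μ(u)(v) := ω(a(v), u)`.
Assume that the image of `a` is isotropic.  Then the radical of the restriction of `ω`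
to `ker μ` equals the image of `a`. -/
theorem radical_of_restriction_eq_image
    {V g : Type*} [AddCommGroup V] [Module ℝ V] [FiniteDimensional ℝ V]
    [AddCommGroup g] [Module ℝ g] [FiniteDimensional ℝ g]
    (ω : V →ₗ[ℝ] V →ₗ[ℝ] ℝ)
    (hskew : ∀ u v : V, ω u v = - ω v u)
    (hnd : ∀ u : V, (∀ v : V, ω u v = 0) → u = 0)
    (a : g →ₗ[ℝ] V)
    (μ : V →ₗ[ℝ] Module.Dual ℝ g)
    (hμ : ∀ (u : V) (v : g), μ u v = ω (a v) u)
    (hiso : ∀ v w : g, ω (a v) (a w) = 0) :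
    {u : V | u ∈ LinearMap.ker μ ∧ ∀ u' ∈ LinearMap.ker μ, ω u u' = 0}
      = Set.range a :=
  radical_of_restriction_eq_image_general ω hskew hnd a μ hμ hiso
end

section
/- Let V and g be finite-dimensional real vector spaces, let π : V* → V be a linear map that is skew in the sense that β(π(α)) = −α(π(β)) for all α, β ∈ V*, let μ : V → g* be linear, let μᵀ : g → V* be its transpose defined by μᵀ(v)(u) := μ(u)(v), and set a := π ∘ μᵀ : g → V. Assume a(v) ∈ ker μ for every v ∈ g. Then, writing W := ker μ, one has {w ∈ W : there exists α ∈ V* with α vanishing on W and π(α) = w} = a(g). -/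
/-!
A functional annihilating `ker μ` lies in the range of the transpose `μ.dualMap`; since `g` is
finite-dimensional every element of `g**` is an evaluation, so that range is exactly the range of
`μᵀ = μ.flip`. Applying `π` turns this into the range of `a`, and the hypothesis on `a` puts that
range inside `ker μ`.
-/

theorem LinearMap.range_flip_eq_dualAnnihilator_ker {K V G : Type*} [Field K]
    [AddCommGroup V] [Module K V] [AddCommGroup G] [Module K G] [FiniteDimensional K G]
    (μ : V →ₗ[K] Module.Dual K G) :
    LinearMap.range μ.flip = (LinearMap.ker μ).dualAnnihilator := by
  have hflip : μ.flip = μ.dualMap ∘ₗ (Module.evalEquiv K G).toLinearMap := rfl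
  rw [hflip, LinearMap.range_comp_of_range_eq_top _ (LinearEquiv.range _),
    LinearMap.range_dualMap_eq_dualAnnihilator_ker]

theorem kernel_of_pullback_dirac_eq_image_general
    {V g : Type*} [AddCommGroup V] [Module ℝ V]
    [AddCommGroup g] [Module ℝ g] [FiniteDimensional ℝ g]
    (π : Module.Dual ℝ V →ₗ[ℝ] V)
    (μ : V →ₗ[ℝ] Module.Dual ℝ g)
    (a : g →ₗ[ℝ] V)
    (ha : a = π ∘ₗ μ.flip)
    (hker : ∀ v : g, a v ∈ LinearMap.ker μ) :
    {w : V | w ∈ LinearMap.ker μ ∧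
        ∃ α : Module.Dual ℝ V, (∀ u ∈ LinearMap.ker μ, α u = 0) ∧ π α = w}
      = Set.range a := by
  have hrange (α : Module.Dual ℝ V) :
      (∀ u ∈ LinearMap.ker μ, α u = 0) ↔ α ∈ LinearMap.range μ.flip := by
    rw [LinearMap.range_flip_eq_dualAnnihilator_ker, Submodule.mem_dualAnnihilator]
  subst ha
  ext w
  constructor
  · rintro ⟨-, α, hα, rfl⟩
    obtain ⟨v, rfl⟩ := (hrange α).mp hα
    exact ⟨v, rfl⟩
  · rintro ⟨v, rfl⟩
    exact ⟨hker v, μ.flip v, (hrange _).mpr ⟨v, rfl⟩, rfl⟩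

/-- Let `V` and `g` be finite-dimensional real vector spaces, `π : V* → V` a skew
linear map, `μ : V → g*` linear, `μᵀ : g → V*` its transpose, and `a := π ∘ μᵀ`.
Assume `a(v) ∈ ker μ` for all `v`.  Then, with `W := ker μ`,
`{w ∈ W : ∃ α ∈ W°, π(α) = w} = a(g)`. -/
theorem kernel_of_pullback_dirac_eq_image
    {V g : Type*} [AddCommGroup V] [Module ℝ V] [FiniteDimensional ℝ V]
    [AddCommGroup g] [Module ℝ g] [FiniteDimensional ℝ g]
    (π : Module.Dual ℝ V →ₗ[ℝ] V)
    (hπ : ∀ α β : Module.Dual ℝ V, β (π α) = - α (π β))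
    (μ : V →ₗ[ℝ] Module.Dual ℝ g)
    (a : g →ₗ[ℝ] V)
    (ha : a = π ∘ₗ μ.flip)
    (hker : ∀ v : g, a v ∈ LinearMap.ker μ) :
    {w : V | w ∈ LinearMap.ker μ ∧
        ∃ α : Module.Dual ℝ V, (∀ u ∈ LinearMap.ker μ, α u = 0) ∧ π α = w}
      = Set.range a :=
  kernel_of_pullback_dirac_eq_image_general π μ a ha hker
end

section
/- Let V and W be finite-dimensional real vector spaces, f : V → W a linear map, and L ⊆ W ⊕ W* a Lagrangian subspace with respect to the canonical symmetric pairing. Then the pullback f^!(L) := {(v, f*(β)) : v ∈ V, β ∈ W*, (f(v), β) ∈ L} is a Lagrangian subspace of V ⊕ V*, where f* : W* → V* is the transpose of f. -/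
/-- The canonical symmetric pairing on `V ⊕ V*`. -/
def canPair {V : Type*} [AddCommGroup V] [Module ℝ V]
    (x y : V × Module.Dual ℝ V) : ℝ :=
  x.2 y.1 + y.2 x.1

/-- A subset of `V ⊕ V*` is Lagrangian if it equals its own orthogonal complement
with respect to the canonical symmetric pairing. -/
def IsLagrangian {V : Type*} [AddCommGroup V] [Module ℝ V]
    (L : Set (V × Module.Dual ℝ V)) : Prop :=
  L = {x | ∀ y ∈ L, canPair x y = 0}

/-- Surjectivity of pullback of annihilators: if `δ` annihilates `f ⁻¹ S`, then
`δ = f.dualMap γ` for some `γ` annihilating `S`. -/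
lemma exists_dualMap_of_mem_dualAnnihilator_comap
    {V W : Type*} [AddCommGroup V] [Module ℝ V]
    [AddCommGroup W] [Module ℝ W]
    (f : V →ₗ[ℝ] W) (S : Submodule ℝ W) (δ : Module.Dual ℝ V)
    (hδ : δ ∈ (S.comap f).dualAnnihilator) :
    ∃ γ ∈ S.dualAnnihilator, f.dualMap γ = δ := by
  set g : V →ₗ[ℝ] W ⧸ S := S.mkQ.comp f with hg
  have hker : LinearMap.ker g = S.comap f := by
    rw [hg, LinearMap.ker_comp, Submodule.ker_mkQ]
  have hδ' : δ ∈ (LinearMap.ker g).dualAnnihilator := by rwa [hker]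
  rw [← LinearMap.range_dualMap_eq_dualAnnihilator_ker] at hδ'
  obtain ⟨ε, hε⟩ := hδ'
  refine ⟨S.mkQ.dualMap ε, ?_, ?_⟩
  · rw [← Submodule.range_dualMap_mkQ_eq]
    exact ⟨ε, rfl⟩
  · have : f.dualMap (S.mkQ.dualMap ε) = g.dualMap ε := by
      rw [← LinearMap.comp_apply, LinearMap.dualMap_comp_dualMap, hg]
    rw [this, hε]

/-- The pullback `f^!(L) := {(v, f*(β)) : (f(v), β) ∈ L}` of a Lagrangian subspace
`L ⊆ W ⊕ W*` along a linear map `f : V → W` is a Lagrangian subspace of `V ⊕ V*`. -/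
theorem pullback_lagrangian
    {V W : Type*} [AddCommGroup V] [Module ℝ V] [FiniteDimensional ℝ V]
    [AddCommGroup W] [Module ℝ W] [FiniteDimensional ℝ W]
    (f : V →ₗ[ℝ] W) (L : Set (W × Module.Dual ℝ W)) (hL : IsLagrangian L) :
    IsLagrangian {x : V × Module.Dual ℝ V |
      ∃ (v : V) (β : Module.Dual ℝ W), (f v, β) ∈ L ∧ x = (v, f.dualMap β)} := by
  -- basic consequences of `hL`
  have hL1 : ∀ x ∈ L, ∀ y ∈ L, canPair x y = 0 := by
    intro x hx
    rw [hL] at hx; exact hx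
  have hL2 : ∀ x, (∀ y ∈ L, canPair x y = 0) → x ∈ L := by
    intro x hx; rw [hL]; exact hx
  -- `L` is a submodule
  have hadd : ∀ x y, x ∈ L → y ∈ L → x + y ∈ L := by
    intro x y hx hy
    apply hL2; intro z hz
    have h1 := hL1 x hx z hz
    have h2 := hL1 y hy z hz
    simp only [canPair, Prod.fst_add, Prod.snd_add, LinearMap.add_apply, map_add] at *
    linarith
  have hsmul : ∀ (c : ℝ) x, x ∈ L → c • x ∈ L := by
    intro c x hx
    apply hL2; intro z hz
    have h1 := hL1 x hx z hz
    simp only [canPair, Prod.smul_fst, Prod.smul_snd, LinearMap.smul_apply, map_smul,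
      smul_eq_mul] at *
    rw [← mul_add, h1, mul_zero]
  -- the projection of `L` to `W`
  let LS : Submodule ℝ (W × Module.Dual ℝ W) :=
    { carrier := L
      add_mem' := fun hx hy => hadd _ _ hx hy
      zero_mem' := by
        apply hL2; intro z hz; simp [canPair]
      smul_mem' := fun c x hx => hsmul c x hx }
  let S : Submodule ℝ W := LS.map (LinearMap.fst ℝ W (Module.Dual ℝ W))
  -- `γ ∈ Ann S ↔ (0, γ) ∈ L`
  have hAnn : ∀ γ : Module.Dual ℝ W, γ ∈ S.dualAnnihilator ↔ (0, γ) ∈ L := by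
    intro γ
    rw [Submodule.mem_dualAnnihilator]
    constructor
    · intro h
      apply hL2
      rintro ⟨w, β⟩ hwβ
      have : γ w = 0 := h w ⟨(w, β), hwβ, rfl⟩
      simp [canPair, this]
    · intro h w hw
      obtain ⟨⟨w', β⟩, hmem, hw'⟩ := hw
      have := hL1 _ h _ hmem
      simp only [canPair, map_zero] at this
      simpa [← hw'] using this
  apply Set.eq_of_subset_of_subset
  · -- isotropic
    rintro x ⟨v, β, hvβ, rfl⟩ y ⟨v', β', hv'β', rfl⟩
    have := hL1 _ hvβ _ hv'β'
    simpa [canPair, LinearMap.dualMap_apply] using this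
  · -- coisotropic
    rintro ⟨v, α⟩ hx
    simp only [Set.mem_setOf_eq] at hx ⊢
    -- `f v ∈ S`
    have hfv : f v ∈ S := by
      rw [← (Subspace.forall_mem_dualAnnihilator_apply_eq_zero_iff S (f v))]
      intro γ hγ
      have h0 : canPair (v, α) (0, f.dualMap γ) = 0 :=
        hx (0, f.dualMap γ) ⟨0, γ, by simpa using (hAnn γ).mp hγ, by simp⟩
      simpa [canPair] using h0
    obtain ⟨⟨w, β₀⟩, hβ₀, hw⟩ := hfv
    subst hw
    -- `δ := α - f.dualMap β₀` annihilates `f ⁻¹ S`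
    set δ : Module.Dual ℝ V := α - f.dualMap β₀ with hδdef
    have hδ : δ ∈ (S.comap f).dualAnnihilator := by
      rw [Submodule.mem_dualAnnihilator]
      intro v' hv'
      obtain ⟨⟨w', β'⟩, hmem, hw'⟩ := hv'
      simp only [LinearMap.fst_apply] at hw'
      subst hw'
      have h1 : canPair (v, α) (v', f.dualMap β') = 0 :=
        hx _ ⟨v', β', hmem, rfl⟩
      have h2 := hL1 _ hβ₀ _ hmem
      simp only [canPair, LinearMap.dualMap_apply] at h1 h2
      simp only [hδdef, LinearMap.sub_apply, LinearMap.dualMap_apply]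
      linarith
    obtain ⟨γ, hγS, hγ⟩ := exists_dualMap_of_mem_dualAnnihilator_comap f S δ hδ
    refine ⟨v, β₀ + γ, ?_, ?_⟩
    · have h0γ : ((0 : W), γ) ∈ L := (hAnn γ).mp hγS
      have := hadd _ _ hβ₀ h0γ
      simpa using this
    · have : f.dualMap (β₀ + γ) = α := by
        rw [map_add, hγ, hδdef]; abel
      rw [this]
end

section
/- Let V and W be finite-dimensional real vector spaces, f : V → W a linear map, and L ⊆ V ⊕ V* a Lagrangian subspace with respect to the canonical symmetric pairing. Then the pushforward f_!(L) := {(f(v), β) : v ∈ V, β ∈ W*, (v, f*(β)) ∈ L} is a Lagrangian subspace of W ⊕ W*, where f* : W* → V* is the transpose of f. -/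
/-- The pushforward `f_!(L) := {(f(v), β) : (v, f*(β)) ∈ L}` of a Lagrangian subspace
`L ⊆ V ⊕ V*` along a linear map `f : V → W` is a Lagrangian subspace of `W ⊕ W*`. -/
theorem pushforward_lagrangian
    {V W : Type*} [AddCommGroup V] [Module ℝ V] [FiniteDimensional ℝ V]
    [AddCommGroup W] [Module ℝ W] [FiniteDimensional ℝ W]
    (f : V →ₗ[ℝ] W) (L : Set (V × Module.Dual ℝ V)) (hL : IsLagrangian L) :
    IsLagrangian {x : W × Module.Dual ℝ W |
      ∃ (v : V) (β : Module.Dual ℝ W), (v, f.dualMap β) ∈ L ∧ x = (f v, β)} := by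
  classical
  have hmem : ∀ x, x ∈ L ↔ ∀ y ∈ L, canPair x y = 0 := by
    intro x
    constructor
    · intro hx; rw [hL] at hx; exact hx
    · intro hx; rw [hL]; exact hx
  -- `L` is a submodule
  let LS : Submodule ℝ (V × Module.Dual ℝ V) :=
    { carrier := L
      zero_mem' := by
        rw [hmem]; intro y hy; simp [canPair]
      add_mem' := by
        intro a b ha hb
        rw [hmem] at ha hb ⊢
        intro y hy
        have h1 := ha y hy
        have h2 := hb y hy
        simp only [canPair, Prod.fst_add, Prod.snd_add, LinearMap.add_apply, map_add] at h1 h2 ⊢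
        linarith
      smul_mem' := by
        intro c a ha
        rw [hmem] at ha ⊢
        intro y hy
        have h1 := ha y hy
        simp only [canPair, Prod.smul_fst, Prod.smul_snd, LinearMap.smul_apply, map_smul,
          smul_eq_mul] at h1 ⊢
        rw [← mul_add, h1, mul_zero] }
  unfold IsLagrangian
  ext x
  simp only [Set.mem_setOf_eq]
  constructor
  · rintro ⟨v, β, hvβ, rfl⟩ y hy
    obtain ⟨v', β', hv'β', rfl⟩ := hy
    have h1 := (hmem _).1 hvβ _ hv'β'
    simp only [canPair, LinearMap.dualMap_apply'] at h1 ⊢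
    simpa using h1
  · intro hx
    -- `x = (w, β)` orthogonal to the pushforward; build the annihilating functional
    let h : (V × Module.Dual ℝ W) →ₗ[ℝ] (V × Module.Dual ℝ V) :=
      (LinearMap.id : V →ₗ[ℝ] V).prodMap f.dualMap
    let g : (V × Module.Dual ℝ W) →ₗ[ℝ] ((V × Module.Dual ℝ V) ⧸ LS) := LS.mkQ ∘ₗ h
    let Λ : Module.Dual ℝ (V × Module.Dual ℝ W) :=
      (f.dualMap x.2) ∘ₗ LinearMap.fst ℝ V (Module.Dual ℝ W)
        + (Module.Dual.eval ℝ W x.1) ∘ₗ LinearMap.snd ℝ V (Module.Dual ℝ W)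
    have hΛapp : ∀ p : V × Module.Dual ℝ W, Λ p = x.2 (f p.1) + p.2 x.1 := by
      intro p; simp [Λ]
    have hkg : ∀ p : V × Module.Dual ℝ W, p ∈ LinearMap.ker g ↔ (p.1, f.dualMap p.2) ∈ L := by
      intro p
      simp only [g, h, LinearMap.mem_ker, LinearMap.comp_apply, LinearMap.prodMap_apply,
        LinearMap.id_apply, Submodule.mkQ_apply, Submodule.Quotient.mk_eq_zero]
      rfl
    have hΛmem : Λ ∈ Submodule.dualAnnihilator (LinearMap.ker g) := by
      rw [Submodule.mem_dualAnnihilator]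
      intro p hp
      have hpL : (p.1, f.dualMap p.2) ∈ L := (hkg p).1 hp
      have hF : (f p.1, p.2) ∈ {x : W × Module.Dual ℝ W |
          ∃ (v : V) (β : Module.Dual ℝ W), (v, f.dualMap β) ∈ L ∧ x = (f v, β)} :=
        ⟨p.1, p.2, hpL, rfl⟩
      have h0 := hx _ hF
      simp only [canPair] at h0
      rw [hΛapp]
      linarith
    obtain ⟨ψ, hψ⟩ : Λ ∈ LinearMap.range g.dualMap := by
      rw [LinearMap.range_dualMap_eq_dualAnnihilator_ker]; exact hΛmem
    let μ : Module.Dual ℝ (V × Module.Dual ℝ V) := LS.mkQ.dualMap ψ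
    have hμL : ∀ y ∈ L, μ y = 0 := by
      intro y hy
      have : LS.mkQ y = 0 := (Submodule.Quotient.mk_eq_zero LS).2 hy
      simp only [μ, LinearMap.dualMap_apply', LinearMap.comp_apply]
      rw [this, map_zero]
    have hΛeq : ∀ p, Λ p = μ (h p) := by
      intro p
      rw [← hψ]
      rfl
    let u : V := (Module.evalEquiv ℝ V).symm (μ ∘ₗ LinearMap.inr ℝ V (Module.Dual ℝ V))
    let η : Module.Dual ℝ V := μ ∘ₗ LinearMap.inl ℝ V (Module.Dual ℝ V)
    have hu : ∀ ξ : Module.Dual ℝ V, ξ u = μ (0, ξ) := by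
      intro ξ
      have := Module.apply_evalEquiv_symm_apply (R := ℝ) (M := V) ξ
        (μ ∘ₗ LinearMap.inr ℝ V (Module.Dual ℝ V))
      exact this
    have hμdec : ∀ y : V × Module.Dual ℝ V, μ y = η y.1 + y.2 u := by
      intro y
      rw [hu]
      have : y = (y.1, 0) + (0, y.2) := by simp
      rw [show μ y = μ ((y.1, (0 : Module.Dual ℝ V)) + ((0 : V), y.2)) by rw [← this],
        map_add]
      rfl
    have huη : (u, η) ∈ L := by
      rw [hmem]
      intro y hy
      have h0 := hμL y hy
      rw [hμdec] at h0
      simpa [canPair] using h0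
    have hη : f.dualMap x.2 = η := by
      ext v'
      have h0 := hΛeq (v', 0)
      rw [hΛapp, hμdec] at h0
      simpa [h] using h0
    have hw : f u = x.1 := by
      rw [← sub_eq_zero, ← Module.forall_dual_apply_eq_zero_iff ℝ (f u - x.1)]
      intro φ
      have h0 := hΛeq (0, φ)
      rw [hΛapp, hμdec] at h0
      simp only [h, LinearMap.prodMap_apply, LinearMap.id_apply, map_zero, zero_add,
        LinearMap.dualMap_apply'] at h0
      simp only [map_sub, sub_eq_zero]
      simpa using h0.symm
    refine ⟨u, x.2, ?_, ?_⟩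
    · rw [hη]; exact huη
    · rw [hw]
end

section
/- Let V be a finite-dimensional real vector space and let L₁, L₂ ⊆ V ⊕ V* be Lagrangian subspaces with respect to the canonical symmetric pairing. Then their tangential product L₁ ⋆ L₂ := {(v, α + β) : (v, α) ∈ L₁ and (v, β) ∈ L₂} is again a Lagrangian subspace of V ⊕ V*. -/
open Module LinearMap

namespace LinearMap.BilinForm

section Prod

variable {R M₁ M₂ : Type*} [CommRing R] [AddCommGroup M₁] [Module R M₁]
  [AddCommGroup M₂] [Module R M₂]

def prod (B₁ : LinearMap.BilinForm R M₁) (B₂ : LinearMap.BilinForm R M₂) :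
    LinearMap.BilinForm R (M₁ × M₂) :=
  B₁.compl₁₂ (fst R M₁ M₂) (fst R M₁ M₂) + B₂.compl₁₂ (snd R M₁ M₂) (snd R M₁ M₂)

variable {B₁ : LinearMap.BilinForm R M₁} {B₂ : LinearMap.BilinForm R M₂}

@[simp]
lemma prod_apply (x y : M₁ × M₂) : B₁.prod B₂ x y = B₁ x.1 y.1 + B₂ x.2 y.2 := rfl

lemma IsSymm.prod (h₁ : B₁.IsSymm) (h₂ : B₂.IsSymm) : (B₁.prod B₂).IsSymm :=
  ⟨fun x y => by rw [prod_apply, prod_apply, h₁.eq, h₂.eq]⟩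

lemma Nondegenerate.prod (h₁ : B₁.Nondegenerate) (h₂ : B₂.Nondegenerate) :
    (B₁.prod B₂).Nondegenerate := by
  refine ⟨fun x hx => Prod.ext (h₁.1 _ fun y => ?_) (h₂.1 _ fun y => ?_),
    fun x hx => Prod.ext (h₁.2 _ fun y => ?_) (h₂.2 _ fun y => ?_)⟩
  · simpa using hx (y, 0)
  · simpa using hx (0, y)
  · simpa using hx (y, 0)
  · simpa using hx (0, y)

lemma orthogonal_prod (N₁ : Submodule R M₁) (N₂ : Submodule R M₂) :
    (B₁.prod B₂).orthogonal (N₁.prod N₂) = (B₁.orthogonal N₁).prod (B₂.orthogonal N₂) := by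
  ext x
  simp only [mem_orthogonal_iff, Submodule.mem_prod, prod_apply, Prod.forall]
  refine ⟨fun h => ⟨fun y hy => ?_, fun y hy => ?_⟩, fun ⟨h₁, h₂⟩ y₁ y₂ hy => ?_⟩
  · simpa using h y 0 ⟨hy, N₂.zero_mem⟩
  · simpa using h 0 y ⟨N₁.zero_mem, hy⟩
  · rw [h₁ y₁ hy.1, h₂ y₂ hy.2, add_zero]

end Prod

lemma orthogonal_sup {R M : Type*} [CommRing R] [AddCommGroup M] [Module R M]
    (B : LinearMap.BilinForm R M) (N L : Submodule R M) :
    B.orthogonal (N ⊔ L) = B.orthogonal N ⊓ B.orthogonal L := by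
  refine le_antisymm (le_inf (orthogonal_le le_sup_left) (orthogonal_le le_sup_right)) ?_
  rintro x ⟨hN, hL⟩ y hy
  obtain ⟨n, hn, l, hl, rfl⟩ := Submodule.mem_sup.1 hy
  rw [map_add, LinearMap.add_apply, hN n hn, hL l hl, add_zero]

lemma orthogonal_inf {K V : Type*} [Field K] [AddCommGroup V] [Module K V] [FiniteDimensional K V]
    {B : LinearMap.BilinForm K V} (hB : B.Nondegenerate) (hB₀ : B.IsRefl) (N L : Submodule K V) :
    B.orthogonal (N ⊓ L) = B.orthogonal N ⊔ B.orthogonal L := by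
  conv_lhs => rw [← orthogonal_orthogonal hB hB₀ N, ← orthogonal_orthogonal hB hB₀ L,
    ← orthogonal_sup]
  exact orthogonal_orthogonal hB hB₀ _

end LinearMap.BilinForm

section TangentialProduct

variable (K V : Type*) [Field K] [AddCommGroup V] [Module K V]

def canPairing : LinearMap.BilinForm K (V × Dual K V) :=
  LinearMap.mk₂ K (fun x y => x.2 y.1 + y.2 x.1)
    (fun _ _ _ => by simp only [Prod.fst_add, Prod.snd_add, map_add, LinearMap.add_apply]; abel)
    (fun _ _ _ => by simp only [Prod.smul_fst, Prod.smul_snd, map_smul, LinearMap.smul_apply,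
      smul_eq_mul, mul_add])
    (fun _ _ _ => by simp only [Prod.fst_add, Prod.snd_add, map_add, LinearMap.add_apply]; abel)
    (fun _ _ _ => by simp only [Prod.smul_fst, Prod.smul_snd, map_smul, LinearMap.smul_apply,
      smul_eq_mul, mul_add])

def sameTangent : Submodule K ((V × Dual K V) × (V × Dual K V)) :=
  LinearMap.eqLocus (fst K V (Dual K V) ∘ₗ fst _ _ _) (fst K V (Dual K V) ∘ₗ snd _ _ _)

def addCotangent : (V × Dual K V) × (V × Dual K V) →ₗ[K] V × Dual K V :=
  (fst K V (Dual K V) ∘ₗ fst _ _ _).prod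
    (snd K V (Dual K V) ∘ₗ fst _ _ _ + snd K V (Dual K V) ∘ₗ snd _ _ _)

variable {K V}

def tangentialProduct (M₁ M₂ : Submodule K (V × Dual K V)) : Submodule K (V × Dual K V) :=
  (M₁.prod M₂ ⊓ sameTangent K V).map (addCotangent K V)

@[simp]
lemma canPairing_apply (x y : V × Dual K V) : canPairing K V x y = x.2 y.1 + y.2 x.1 := rfl

@[simp]
lemma mem_sameTangent {a : (V × Dual K V) × (V × Dual K V)} :
    a ∈ sameTangent K V ↔ a.1.1 = a.2.1 := Iff.rfl

@[simp]
lemma addCotangent_apply (a : (V × Dual K V) × (V × Dual K V)) :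
    addCotangent K V a = (a.1.1, a.1.2 + a.2.2) := rfl

lemma isSymm_canPairing : (canPairing K V).IsSymm :=
  ⟨fun _ _ => add_comm _ _⟩

lemma nondegenerate_canPairing : (canPairing K V).Nondegenerate := by
  refine (IsRefl.nondegenerate_iff_separatingLeft (B := canPairing K V)
    isSymm_canPairing.isRefl).2 fun x hx => Prod.ext ?_ ?_
  · exact (forall_dual_apply_eq_zero_iff K x.1).1 fun γ => by simpa using hx (0, γ)
  · ext w
    simpa using hx (w, 0)

lemma canPairing_addCotangent {a b : (V × Dual K V) × (V × Dual K V)}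
    (ha : a ∈ sameTangent K V) (hb : b ∈ sameTangent K V) :
    canPairing K V (addCotangent K V a) (addCotangent K V b) =
      (canPairing K V).prod (canPairing K V) a b := by
  rw [mem_sameTangent] at ha hb
  simp only [canPairing_apply, addCotangent_apply, LinearMap.BilinForm.prod_apply,
    LinearMap.add_apply, ha, hb]
  ring

lemma orthogonal_sameTangent_le :
    ((canPairing K V).prod (canPairing K V)).orthogonal (sameTangent K V) ≤
      sameTangent K V ⊓ ker (addCotangent K V) := by
  intro a ha
  have hv₁ : a.1.1 = 0 := (forall_dual_apply_eq_zero_iff K _).1 fun γ => by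
    simpa using ha ((0, γ), (0, 0)) rfl
  have hv₂ : a.2.1 = 0 := (forall_dual_apply_eq_zero_iff K _).1 fun γ => by
    simpa using ha ((0, 0), (0, γ)) rfl
  have hα : a.1.2 + a.2.2 = 0 := by
    ext w
    simpa using ha ((w, 0), (w, 0)) rfl
  exact ⟨hv₁.trans hv₂.symm, by simp [hv₁, hα]⟩

lemma coe_tangentialProduct (M₁ M₂ : Submodule K (V × Dual K V)) :
    (tangentialProduct M₁ M₂ : Set (V × Dual K V)) =
      {x | ∃ (v : V) (α β : Dual K V), (v, α) ∈ M₁ ∧ (v, β) ∈ M₂ ∧ x = (v, α + β)} := by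
  ext x
  constructor
  · rintro ⟨a, ⟨⟨h₁, h₂⟩, hC : a.1.1 = a.2.1⟩, rfl⟩
    exact ⟨a.1.1, a.1.2, a.2.2, h₁, hC ▸ h₂, rfl⟩
  · rintro ⟨v, α, β, h₁, h₂, rfl⟩
    exact ⟨((v, α), (v, β)), ⟨⟨h₁, h₂⟩, rfl⟩, rfl⟩

variable [FiniteDimensional K V]

lemma orthogonal_tangentialProduct (M₁ M₂ : Submodule K (V × Dual K V)) :
    (canPairing K V).orthogonal (tangentialProduct M₁ M₂) =
      tangentialProduct ((canPairing K V).orthogonal M₁) ((canPairing K V).orthogonal M₂) := by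
  set B := canPairing K V
  set C := sameTangent K V
  set σ := addCotangent K V
  apply le_antisymm
  · intro x hx
    set a₀ : (V × Dual K V) × (V × Dual K V) := ((x.1, x.2), (x.1, 0))
    have ha₀C : a₀ ∈ C := rfl
    have hσa₀ : σ a₀ = x := by simp [σ, a₀]
    have ha₀ : a₀ ∈ (B.prod B).orthogonal (M₁.prod M₂ ⊓ C) := fun n hn => by
      rw [← canPairing_addCotangent hn.2 ha₀C, hσa₀]
      exact hx _ ⟨n, hn, rfl⟩
    rw [LinearMap.BilinForm.orthogonal_inf
        (nondegenerate_canPairing.prod nondegenerate_canPairing)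
        (isSymm_canPairing.prod isSymm_canPairing).isRefl,
      LinearMap.BilinForm.orthogonal_prod] at ha₀
    obtain ⟨l, hl, c, hc, hlc⟩ := Submodule.mem_sup.1 ha₀
    obtain ⟨hcC, hσc⟩ := orthogonal_sameTangent_le hc
    have hl_eq : l = a₀ - c := eq_sub_of_add_eq hlc
    refine ⟨l, ⟨hl, hl_eq ▸ C.sub_mem ha₀C hcC⟩, ?_⟩
    rw [hl_eq, map_sub, mem_ker.1 hσc, sub_zero, hσa₀]
  · rintro _ ⟨a, ⟨ha, haC⟩, rfl⟩ _ ⟨b, ⟨hb, hbC⟩, rfl⟩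
    rw [← LinearMap.BilinForm.orthogonal_prod] at ha
    rw [canPairing_addCotangent hbC haC]
    exact ha b hb

end TangentialProduct

section Lagrangian

variable {V : Type*} [AddCommGroup V] [Module ℝ V]

lemma setOf_forall_canPair_eq_zero (L : Set (V × Dual ℝ V)) :
    {x | ∀ y ∈ L, canPair x y = 0} =
      ((canPairing ℝ V).orthogonal (Submodule.span ℝ L) : Set (V × Dual ℝ V)) := by
  ext x
  have hsymm (y : V × Dual ℝ V) : canPair x y = (canPairing ℝ V).flip x y := add_comm _ _
  simp only [Set.mem_ofPred_eq, SetLike.mem_coe, LinearMap.BilinForm.mem_orthogonal_iff, hsymm]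
  exact (Submodule.span_le (p := ker ((canPairing ℝ V).flip x))).symm

lemma isLagrangian_iff_exists_submodule {L : Set (V × Dual ℝ V)} :
    IsLagrangian L ↔ ∃ M : Submodule ℝ (V × Dual ℝ V),
      (M : Set (V × Dual ℝ V)) = L ∧ (canPairing ℝ V).orthogonal M = M := by
  rw [IsLagrangian, setOf_forall_canPair_eq_zero]
  constructor
  · intro hL
    have hspan : Submodule.span ℝ L = (canPairing ℝ V).orthogonal (Submodule.span ℝ L) := by
      conv_lhs => rw [hL]
      exact Submodule.span_eq _
    refine ⟨_, hL.symm, ?_⟩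
    rw [← hspan]
    exact hspan.symm
  · rintro ⟨M, rfl, hM⟩
    rw [Submodule.span_eq, hM]

end Lagrangian

/-- The tangential product `L₁ ⋆ L₂ := {(v, α + β) : (v, α) ∈ L₁, (v, β) ∈ L₂}`
of two Lagrangian subspaces of `V ⊕ V*` is again a Lagrangian subspace. -/
theorem tangential_product_lagrangian
    {V : Type*} [AddCommGroup V] [Module ℝ V] [FiniteDimensional ℝ V]
    (L₁ L₂ : Set (V × Module.Dual ℝ V))
    (hL₁ : IsLagrangian L₁) (hL₂ : IsLagrangian L₂) :
    IsLagrangian {x : V × Module.Dual ℝ V |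
      ∃ (v : V) (α β : Module.Dual ℝ V), (v, α) ∈ L₁ ∧ (v, β) ∈ L₂ ∧ x = (v, α + β)} := by
  obtain ⟨M₁, rfl, hM₁⟩ := isLagrangian_iff_exists_submodule.1 hL₁
  obtain ⟨M₂, rfl, hM₂⟩ := isLagrangian_iff_exists_submodule.1 hL₂
  refine isLagrangian_iff_exists_submodule.2
    ⟨tangentialProduct M₁ M₂, coe_tangentialProduct M₁ M₂, ?_⟩
  rw [orthogonal_tangentialProduct, hM₁, hM₂]
end

section
/- Let V and W be finite-dimensional real vector spaces and p : V → W a surjective linear map. For any Lagrangian subspaces D ⊆ V ⊕ V* and E ⊆ W ⊕ W* (with respect to the canonical symmetric pairings), one has p_!(D ⋆ p^!(E)) = p_!(D) ⋆ E, where p^!(E) := {(v, p*(β)) : (p(v), β) ∈ E}, p_!(L) := {(p(v), β) : (v, p*(β)) ∈ L}, and L₁ ⋆ L₂ := {(v, α + β) : (v, α) ∈ L₁, (v, β) ∈ L₂}. -/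
/-- The pullback `p^!(E) := {(v, p*(β)) : (p(v), β) ∈ E}`. -/
def dPull {V W : Type*} [AddCommGroup V] [Module ℝ V] [AddCommGroup W] [Module ℝ W]
    (p : V →ₗ[ℝ] W) (E : Set (W × Module.Dual ℝ W)) : Set (V × Module.Dual ℝ V) :=
  {x | ∃ (v : V) (β : Module.Dual ℝ W), (p v, β) ∈ E ∧ x = (v, p.dualMap β)}

/-- The pushforward `p_!(L) := {(p(v), β) : (v, p*(β)) ∈ L}`. -/
def dPush {V W : Type*} [AddCommGroup V] [Module ℝ V] [AddCommGroup W] [Module ℝ W]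
    (p : V →ₗ[ℝ] W) (L : Set (V × Module.Dual ℝ V)) : Set (W × Module.Dual ℝ W) :=
  {x | ∃ (v : V) (β : Module.Dual ℝ W), (v, p.dualMap β) ∈ L ∧ x = (p v, β)}

/-- The tangential product `L₁ ⋆ L₂ := {(v, α + β) : (v, α) ∈ L₁, (v, β) ∈ L₂}`. -/
def dStar {V : Type*} [AddCommGroup V] [Module ℝ V]
    (L₁ L₂ : Set (V × Module.Dual ℝ V)) : Set (V × Module.Dual ℝ V) :=
  {x | ∃ (v : V) (α β : Module.Dual ℝ V), (v, α) ∈ L₁ ∧ (v, β) ∈ L₂ ∧ x = (v, α + β)}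

/-- For a surjective linear map `p : V → W` and Lagrangian subspaces `D ⊆ V ⊕ V*`,
`E ⊆ W ⊕ W*`, one has `p_!(D ⋆ p^!(E)) = p_!(D) ⋆ E`. -/
theorem push_star_pull
    {V W : Type*} [AddCommGroup V] [Module ℝ V] [FiniteDimensional ℝ V]
    [AddCommGroup W] [Module ℝ W] [FiniteDimensional ℝ W]
    (p : V →ₗ[ℝ] W) (hp : Function.Surjective p)
    (D : Set (V × Module.Dual ℝ V)) (hD : IsLagrangian D)
    (E : Set (W × Module.Dual ℝ W)) (hE : IsLagrangian E) :
    dPush p (dStar D (dPull p E)) = dStar (dPush p D) E := by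
  ext x
  simp only [dPush, dStar, dPull, Set.mem_setOf_eq]
  constructor
  · rintro ⟨v, β, ⟨v', α, γ, hα, ⟨v'', δ, hδ, hvγ⟩, hsum⟩, rfl⟩
    obtain ⟨rfl, rfl⟩ := Prod.mk.injEq .. ▸ hvγ
    obtain ⟨rfl, hpβ⟩ := Prod.mk.injEq .. ▸ hsum
    refine ⟨p v, β - δ, δ, ⟨v, β - δ, ?_, rfl⟩, hδ, by simp⟩
    have : p.dualMap (β - δ) = α := by
      rw [map_sub, hpβ]; abel
    rw [this]; exact hα
  · rintro ⟨w, α, β, ⟨v, α', hD', hwα⟩, hE', rfl⟩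
    obtain ⟨rfl, rfl⟩ := Prod.mk.injEq .. ▸ hwα
    exact ⟨v, α + β, ⟨v, p.dualMap α, p.dualMap β, hD', ⟨v, β, hE', rfl⟩, by simp⟩, rfl⟩
end

section
/- Let g be a finite-dimensional real Lie algebra and λ ∈ g*. Let c ⊆ g be a subspace with g = g_λ ⊕ c and [g_λ, c] ⊆ c, where g_λ := {v ∈ g : λ([v,w]) = 0 for all w ∈ g}, let q : g → g_λ be the projection with kernel c, and for ξ ∈ g_λ* set j(ξ) := λ + ξ∘q ∈ g*. Then for all ξ ∈ g_λ*, v₁, v₂ ∈ g_λ and w₁, w₂ ∈ c: j(ξ)([v₁ + w₁, v₂ + w₂]) = ξ([v₁, v₂]) + j(ξ)([w₁, w₂]). -/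
/-- Let `g` be a finite-dimensional real Lie algebra, `λ ∈ g*`, `g_λ` the coadjoint
stabilizer of `λ`, `c` an `ad(g_λ)`-invariant complement of `g_λ`, `q : g → g_λ` the
projection with kernel `c`, and `j(ξ) := λ + ξ∘q`.  Then for `v₁, v₂ ∈ g_λ` and
`w₁, w₂ ∈ c`:  `j(ξ)([v₁+w₁, v₂+w₂]) = ξ([v₁,v₂]) + j(ξ)([w₁,w₂])`. -/
theorem lie_poisson_along_slice
    {g : Type*} [LieRing g] [LieAlgebra ℝ g] [FiniteDimensional ℝ g]
    (lam : Module.Dual ℝ g)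
    (gl c : Submodule ℝ g)
    (hgl : ∀ v : g, v ∈ gl ↔ ∀ w : g, lam ⁅v, w⁆ = 0)
    (hcompl : IsCompl gl c)
    (hinv : ∀ v ∈ gl, ∀ w ∈ c, ⁅v, w⁆ ∈ c)
    (q : g →ₗ[ℝ] g)
    (hq1 : ∀ v ∈ gl, q v = v) (hq2 : ∀ w ∈ c, q w = 0)
    (ξ : Module.Dual ℝ g)
    (j : Module.Dual ℝ g) (hj : j = lam + ξ ∘ₗ q) :
    ∀ v₁ ∈ gl, ∀ v₂ ∈ gl, ∀ w₁ ∈ c, ∀ w₂ ∈ c,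
      j ⁅v₁ + w₁, v₂ + w₂⁆ = ξ (q ⁅v₁, v₂⁆) + j ⁅w₁, w₂⁆ := by
  intro v₁ hv₁ v₂ hv₂ w₁ hw₁ w₂ hw₂
  subst hj
  have hlam12 : lam ⁅v₁, v₂⁆ = 0 := (hgl v₁).mp hv₁ v₂
  have hlam1w : lam ⁅v₁, w₂⁆ = 0 := (hgl v₁).mp hv₁ w₂
  have hlamw1 : lam ⁅w₁, v₂⁆ = 0 := by
    have := (hgl v₂).mp hv₂ w₁
    rw [← lie_skew, map_neg, this, neg_zero]
  have hq1w : q ⁅v₁, w₂⁆ = 0 := hq2 _ (hinv v₁ hv₁ w₂ hw₂)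
  have hqw1 : q ⁅w₁, v₂⁆ = 0 := by
    have : q ⁅v₂, w₁⁆ = 0 := hq2 _ (hinv v₂ hv₂ w₁ hw₁)
    rw [← lie_skew, map_neg, this, neg_zero]
  simp only [add_lie, lie_add, map_add, LinearMap.add_apply, LinearMap.comp_apply,
    hlam12, hlam1w, hlamw1, hq1w, hqw1, map_zero]
  ring
end

section
/- Let g be a finite-dimensional real Lie algebra and λ ∈ g*. Let c ⊆ g be a subspace with g = g_λ ⊕ c and [g_λ, c] ⊆ c, where g_λ := {v ∈ g : λ([v,w]) = 0 for all w ∈ g}, let q : g → g_λ be the projection with kernel c, for ξ ∈ g_λ* set j(ξ) := λ + ξ∘q ∈ g*, and define the skew bilinear form η_ξ on c by η_ξ(w, w') := j(ξ)([w, w']). Then the stabilizer g_{j(ξ)} := {v ∈ g : j(ξ)([v, u]) = 0 for all u ∈ g} decomposes as the internal direct sum g_{j(ξ)} = (g_λ)_ξ ⊕ rad(η_ξ), where (g_λ)_ξ := {v ∈ g_λ : ξ([v, w]) = 0 for all w ∈ g_λ} and rad(η_ξ) := {w ∈ c : η_ξ(w, w') = 0 for all w' ∈ c}. -/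
/-!
The form `B(x, y) := j([x, y])` is block diagonal for `g = g_λ ⊕ c`: for `v ∈ g_λ` and `w ∈ c`,
`λ` kills `[v, w]` because `v` stabilizes `λ`, and `ξ ∘ q` kills it because `[v, w] ∈ c`; by skew
symmetry `B(c, g_λ) = 0` as well. The radical of a block diagonal form is the sum of the radicals of
its blocks, and on `g_λ` the form `B` reduces to `ξ ∘ q ∘ [·, ·]`.
-/

namespace LinearMap

variable {R M N : Type*} [CommSemiring R] [AddCommMonoid M] [Module R M]
  [AddCommMonoid N] [Module R N] {B : M →ₗ[R] M →ₗ[R] N} {p c : Submodule R M}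

theorem forall_apply_add_eq_zero_iff_of_isCompl (hpc : IsCompl p c)
    (hpc₀ : ∀ v ∈ p, ∀ w ∈ c, B v w = 0) (hcp₀ : ∀ w ∈ c, ∀ v ∈ p, B w v = 0)
    {v w : M} (hv : v ∈ p) (hw : w ∈ c) :
    (∀ u, B (v + w) u = 0) ↔ (∀ v' ∈ p, B v v' = 0) ∧ ∀ w' ∈ c, B w w' = 0 := by
  refine ⟨fun h => ⟨fun v' hv' => ?_, fun w' hw' => ?_⟩, fun ⟨hp, hc⟩ u => ?_⟩
  · simpa [hcp₀ w hw v' hv'] using h v'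
  · simpa [hpc₀ v hv w' hw'] using h w'
  · obtain ⟨v', w', hv', hw', rfl⟩ := Submodule.codisjoint_iff_exists_add_eq.mp hpc.codisjoint u
    simp [hp v' hv', hc w' hw', hpc₀ v hv w' hw', hcp₀ w hw v' hv']

end LinearMap

namespace LieAlgebra

variable {R L : Type*} [CommRing R] [LieRing L] [LieAlgebra R L]

def kirillovForm (f : Module.Dual R L) : L →ₗ[R] L →ₗ[R] R :=
  (ad R L : L →ₗ[R] Module.End R L).compr₂ f

@[simp]
theorem kirillovForm_apply (f : Module.Dual R L) (x y : L) : kirillovForm f x y = f ⁅x, y⁆ :=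
  rfl

theorem kirillovForm_swap (f : Module.Dual R L) (x y : L) :
    kirillovForm f y x = -kirillovForm f x y := by
  rw [kirillovForm_apply, kirillovForm_apply, ← lie_skew, map_neg]

variable {lam ξ : Module.Dual R L} {gl c : Submodule R L} {q : L →ₗ[R] L}

theorem kirillovForm_slice_of_mem_stabilizer (hgl : ∀ v ∈ gl, ∀ w, lam ⁅v, w⁆ = 0)
    {v : L} (hv : v ∈ gl) (y : L) : kirillovForm (lam + ξ ∘ₗ q) v y = ξ (q ⁅v, y⁆) := by
  simp [hgl v hv y]

theorem kirillovForm_slice_eq_zero (hgl : ∀ v ∈ gl, ∀ w, lam ⁅v, w⁆ = 0)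
    (hinv : ∀ v ∈ gl, ∀ w ∈ c, ⁅v, w⁆ ∈ c) (hq : ∀ w ∈ c, q w = 0)
    {v w : L} (hv : v ∈ gl) (hw : w ∈ c) : kirillovForm (lam + ξ ∘ₗ q) v w = 0 := by
  rw [kirillovForm_slice_of_mem_stabilizer hgl hv, hq _ (hinv v hv w hw), map_zero]

theorem forall_slice_lie_add_eq_zero_iff (hgl : ∀ v ∈ gl, ∀ w, lam ⁅v, w⁆ = 0)
    (hcompl : IsCompl gl c) (hinv : ∀ v ∈ gl, ∀ w ∈ c, ⁅v, w⁆ ∈ c) (hq : ∀ w ∈ c, q w = 0)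
    {v w : L} (hv : v ∈ gl) (hw : w ∈ c) :
    (∀ u, (lam + ξ ∘ₗ q) ⁅v + w, u⁆ = 0) ↔
      (∀ v' ∈ gl, ξ (q ⁅v, v'⁆) = 0) ∧ ∀ w' ∈ c, (lam + ξ ∘ₗ q) ⁅w, w'⁆ = 0 := by
  have hglc (v) (hv : v ∈ gl) (w) (hw : w ∈ c) :=
    kirillovForm_slice_eq_zero (ξ := ξ) hgl hinv hq hv hw
  have hblock := LinearMap.forall_apply_add_eq_zero_iff_of_isCompl hcompl hglc
    (fun w hw v hv => by rw [kirillovForm_swap, hglc v hv w hw, neg_zero]) hv hw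
  simpa only [kirillovForm_apply, kirillovForm_slice_of_mem_stabilizer hgl hv] using hblock

end LieAlgebra

theorem stabilizer_decomposition_along_slice_general
    {g : Type*} [LieRing g] [LieAlgebra ℝ g]
    (lam : Module.Dual ℝ g)
    (gl c : Submodule ℝ g)
    (hgl : ∀ v : g, v ∈ gl ↔ ∀ w : g, lam ⁅v, w⁆ = 0)
    (hcompl : IsCompl gl c)
    (hinv : ∀ v ∈ gl, ∀ w ∈ c, ⁅v, w⁆ ∈ c)
    (q : g →ₗ[ℝ] g)
    (hq2 : ∀ w ∈ c, q w = 0)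
    (ξ : Module.Dual ℝ g)
    (j : Module.Dual ℝ g) (hj : j = lam + ξ ∘ₗ q) :
    (∀ x : g, (∀ u : g, j ⁅x, u⁆ = 0) ↔
      ∃ v w : g, (v ∈ gl ∧ ∀ v' ∈ gl, ξ (q ⁅v, v'⁆) = 0) ∧
        (w ∈ c ∧ ∀ w' ∈ c, j ⁅w, w'⁆ = 0) ∧ x = v + w) ∧
    (∀ x : g, (x ∈ gl ∧ ∀ v' ∈ gl, ξ (q ⁅x, v'⁆) = 0) →
      (x ∈ c ∧ ∀ w' ∈ c, j ⁅x, w'⁆ = 0) → x = 0) := by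
  subst hj
  have hblock {v w : g} (hv : v ∈ gl) (hw : w ∈ c) :=
    LieAlgebra.forall_slice_lie_add_eq_zero_iff (ξ := ξ) (fun v hv => (hgl v).mp hv) hcompl hinv
      hq2 hv hw
  refine ⟨fun x => ⟨fun hx => ?_, ?_⟩, fun x hx hx' => ?_⟩
  · obtain ⟨v, w, hv, hw, rfl⟩ := Submodule.codisjoint_iff_exists_add_eq.mp hcompl.codisjoint x
    obtain ⟨hvξ, hwj⟩ := (hblock hv hw).mp hx
    exact ⟨v, w, ⟨hv, hvξ⟩, ⟨hw, hwj⟩, rfl⟩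
  · rintro ⟨v, w, ⟨hv, hvξ⟩, ⟨hw, hwj⟩, rfl⟩
    exact (hblock hv hw).mpr ⟨hvξ, hwj⟩
  · exact Submodule.disjoint_def.mp hcompl.disjoint x hx.1 hx'.1

/-- Let `g` be a finite-dimensional real Lie algebra, `λ ∈ g*`, `g_λ` the coadjoint
stabilizer of `λ`, `c` an `ad(g_λ)`-invariant complement of `g_λ`, `q : g → g_λ` the
projection with kernel `c`, `j(ξ) := λ + ξ∘q`, and `η_ξ(w,w') := j(ξ)([w,w'])` on `c`.
Then the stabilizer `g_{j(ξ)}` decomposes as the internal direct sum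
`g_{j(ξ)} = (g_λ)_ξ ⊕ rad(η_ξ)`. -/
theorem stabilizer_decomposition_along_slice
    {g : Type*} [LieRing g] [LieAlgebra ℝ g] [FiniteDimensional ℝ g]
    (lam : Module.Dual ℝ g)
    (gl c : Submodule ℝ g)
    (hgl : ∀ v : g, v ∈ gl ↔ ∀ w : g, lam ⁅v, w⁆ = 0)
    (hcompl : IsCompl gl c)
    (hinv : ∀ v ∈ gl, ∀ w ∈ c, ⁅v, w⁆ ∈ c)
    (q : g →ₗ[ℝ] g)
    (hq1 : ∀ v ∈ gl, q v = v) (hq2 : ∀ w ∈ c, q w = 0)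
    (ξ : Module.Dual ℝ g)
    (j : Module.Dual ℝ g) (hj : j = lam + ξ ∘ₗ q) :
    (∀ x : g, (∀ u : g, j ⁅x, u⁆ = 0) ↔
      ∃ v w : g, (v ∈ gl ∧ ∀ v' ∈ gl, ξ (q ⁅v, v'⁆) = 0) ∧
        (w ∈ c ∧ ∀ w' ∈ c, j ⁅w, w'⁆ = 0) ∧ x = v + w) ∧
    (∀ x : g, (x ∈ gl ∧ ∀ v' ∈ gl, ξ (q ⁅x, v'⁆) = 0) →
      (x ∈ c ∧ ∀ w' ∈ c, j ⁅x, w'⁆ = 0) → x = 0) :=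
  stabilizer_decomposition_along_slice_general lam gl c hgl hcompl hinv q hq2 ξ j hj
end

section
/- Let g be a finite-dimensional real Lie algebra and λ ∈ g*. Let c ⊆ g be a subspace with g = g_λ ⊕ c and [g_λ, c] ⊆ c, where g_λ := {v ∈ g : λ([v,w]) = 0 for all w ∈ g}, let q : g → g_λ be the projection with kernel c, for ξ ∈ g_λ* set j(ξ) := λ + ξ∘q, and let η_ξ(w, w') := j(ξ)([w, w']) for w, w' ∈ c. Then the stabilizer g_{j(ξ)} := {v ∈ g : j(ξ)([v, u]) = 0 for all u ∈ g} is contained in g_λ if and only if the skew bilinear form η_ξ on c is nondegenerate. -/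
/-! The hypotheses force `j ⁅gl, c⁆ = 0`: `lam` kills `⁅gl, g⁆` by definition of `gl`, and
`q` kills `⁅gl, c⁆ ⊆ c`. Hence, in the splitting `g = gl ⊕ c`, the form `j ⁅·, ·⁆` pairs `c`
only with `c`, so an element `v + w` stabilizes `j` exactly when `w` lies in the radical of
`η` on `c`; the stabilizer lies in `gl` iff that radical is zero. -/

section

variable {R L : Type*} [CommRing R] [LieRing L] [Module R L]
  {j : Module.Dual R L} {p c : Submodule R L}

theorem forall_apply_lie_eq_zero_iff_of_isCompl (hpc : IsCompl p c)
    (hj : ∀ v ∈ p, ∀ w ∈ c, j ⁅v, w⁆ = 0) {w : L} (hw : w ∈ c) :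
    (∀ u : L, j ⁅w, u⁆ = 0) ↔ ∀ w' ∈ c, j ⁅w, w'⁆ = 0 := by
  refine ⟨fun h w' _ => h w', fun h u => ?_⟩
  obtain ⟨v, w', hv, hw', rfl⟩ := Submodule.codisjoint_iff_exists_add_eq.mp hpc.codisjoint u
  rw [lie_add, map_add, ← lie_skew, map_neg, hj v hv w hw, h w' hw', neg_zero, add_zero]

theorem apply_add_lie_eq_apply_lie_of_mem (hj : ∀ v ∈ p, ∀ w ∈ c, j ⁅v, w⁆ = 0)
    {v w w' : L} (hv : v ∈ p) (hw' : w' ∈ c) : j ⁅v + w, w'⁆ = j ⁅w, w'⁆ := by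
  rw [add_lie, map_add, hj v hv w' hw', zero_add]

theorem stabilizer_le_iff_radical_eq_bot_of_isCompl (hpc : IsCompl p c)
    (hj : ∀ v ∈ p, ∀ w ∈ c, j ⁅v, w⁆ = 0) :
    (∀ x : L, (∀ u : L, j ⁅x, u⁆ = 0) → x ∈ p) ↔
      ∀ w ∈ c, (∀ w' ∈ c, j ⁅w, w'⁆ = 0) → w = 0 := by
  constructor
  · intro hstab w hw hrad
    have hwp : w ∈ p :=
      hstab w ((forall_apply_lie_eq_zero_iff_of_isCompl hpc hj hw).mpr hrad)
    exact (Submodule.disjoint_def.mp hpc.disjoint) w hwp hw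
  · intro hrad x hx
    obtain ⟨v, w, hv, hw, rfl⟩ := Submodule.codisjoint_iff_exists_add_eq.mp hpc.codisjoint x
    have hw0 : w = 0 := hrad w hw fun w' hw' => by
      rw [← apply_add_lie_eq_apply_lie_of_mem hj hv hw']
      exact hx w'
    rwa [hw0, add_zero]

end

theorem stabilizer_in_gl_iff_nondegenerate_general
    {g : Type*} [LieRing g] [LieAlgebra ℝ g]
    (lam : Module.Dual ℝ g)
    (gl c : Submodule ℝ g)
    (hgl : ∀ v : g, v ∈ gl ↔ ∀ w : g, lam ⁅v, w⁆ = 0)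
    (hcompl : IsCompl gl c)
    (hinv : ∀ v ∈ gl, ∀ w ∈ c, ⁅v, w⁆ ∈ c)
    (q : g →ₗ[ℝ] g)
    (hq2 : ∀ w ∈ c, q w = 0)
    (ξ : Module.Dual ℝ g)
    (j : Module.Dual ℝ g) (hj : j = lam + ξ ∘ₗ q) :
    (∀ x : g, (∀ u : g, j ⁅x, u⁆ = 0) → x ∈ gl) ↔
      (∀ w ∈ c, (∀ w' ∈ c, j ⁅w, w'⁆ = 0) → w = 0) := by
  refine stabilizer_le_iff_radical_eq_bot_of_isCompl hcompl fun v hv w hw => ?_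
  rw [hj, LinearMap.add_apply, LinearMap.comp_apply, (hgl v).mp hv w,
    hq2 _ (hinv v hv w hw), map_zero, add_zero]

/-- Let `g` be a finite-dimensional real Lie algebra, `λ ∈ g*`, `g_λ` the coadjoint
stabilizer of `λ`, `c` an `ad(g_λ)`-invariant complement of `g_λ`, `q : g → g_λ` the
projection with kernel `c`, `j(ξ) := λ + ξ∘q`, and `η_ξ(w,w') := j(ξ)([w,w'])` on `c`.
Then the stabilizer `g_{j(ξ)}` is contained in `g_λ` if and only if `η_ξ` is
nondegenerate on `c`. -/
theorem stabilizer_in_gl_iff_nondegenerate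
    {g : Type*} [LieRing g] [LieAlgebra ℝ g] [FiniteDimensional ℝ g]
    (lam : Module.Dual ℝ g)
    (gl c : Submodule ℝ g)
    (hgl : ∀ v : g, v ∈ gl ↔ ∀ w : g, lam ⁅v, w⁆ = 0)
    (hcompl : IsCompl gl c)
    (hinv : ∀ v ∈ gl, ∀ w ∈ c, ⁅v, w⁆ ∈ c)
    (q : g →ₗ[ℝ] g)
    (hq1 : ∀ v ∈ gl, q v = v) (hq2 : ∀ w ∈ c, q w = 0)
    (ξ : Module.Dual ℝ g)
    (j : Module.Dual ℝ g) (hj : j = lam + ξ ∘ₗ q) :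
    (∀ x : g, (∀ u : g, j ⁅x, u⁆ = 0) → x ∈ gl) ↔
      (∀ w ∈ c, (∀ w' ∈ c, j ⁅w, w'⁆ = 0) → w = 0) :=
  stabilizer_in_gl_iff_nondegenerate_general lam gl c hgl hcompl hinv q hq2 ξ j hj
end

section
/- Let g be a finite-dimensional real Lie algebra and λ ∈ g*. Let c ⊆ g be a subspace with g = g_λ ⊕ c and [g_λ, c] ⊆ c, where g_λ := {v ∈ g : λ([v,w]) = 0 for all w ∈ g}, let q : g → g_λ be the projection with kernel c, for ξ ∈ g_λ* set j(ξ) := λ + ξ∘q, and let η_ξ(w, w') := j(ξ)([w, w']) for w, w' ∈ c. Then g* = c° ⊕ {j(ξ)([w, ·]) : w ∈ c} (an internal direct sum of subspaces of g*) if and only if η_ξ is nondegenerate, where c° := {μ ∈ g* : μ(w) = 0 for all w ∈ c} is the annihilator of c. -/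
open Module

/-- Let `g` be a finite-dimensional real Lie algebra, `λ ∈ g*`, `g_λ` the coadjoint
stabilizer of `λ`, `c` an `ad(g_λ)`-invariant complement of `g_λ`, `q : g → g_λ` the
projection with kernel `c`, `j(ξ) := λ + ξ∘q`, and `η_ξ(w,w') := j(ξ)([w,w'])` on `c`.
Then `g* = c° ⊕ {j(ξ)([w,·]) : w ∈ c}` (internal direct sum) if and only if `η_ξ` is
nondegenerate. -/
theorem transversality_iff_nondegenerate
    {g : Type*} [LieRing g] [LieAlgebra ℝ g] [FiniteDimensional ℝ g]
    (lam : Module.Dual ℝ g)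
    (gl c : Submodule ℝ g)
    (hgl : ∀ v : g, v ∈ gl ↔ ∀ w : g, lam ⁅v, w⁆ = 0)
    (hcompl : IsCompl gl c)
    (hinv : ∀ v ∈ gl, ∀ w ∈ c, ⁅v, w⁆ ∈ c)
    (q : g →ₗ[ℝ] g)
    (hq1 : ∀ v ∈ gl, q v = v) (hq2 : ∀ w ∈ c, q w = 0)
    (ξ : Module.Dual ℝ g)
    (j : Module.Dual ℝ g) (hj : j = lam + ξ ∘ₗ q) :
    ((∀ φ : Module.Dual ℝ g, ∃ α β : Module.Dual ℝ g,
        (∀ w ∈ c, α w = 0) ∧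
        (∃ w ∈ c, β = j ∘ₗ (LieAlgebra.ad ℝ g w : g →ₗ[ℝ] g)) ∧ φ = α + β) ∧
      (∀ φ : Module.Dual ℝ g, (∀ w ∈ c, φ w = 0) →
        (∃ w ∈ c, φ = j ∘ₗ (LieAlgebra.ad ℝ g w : g →ₗ[ℝ] g)) → φ = 0))
    ↔ (∀ w ∈ c, (∀ w' ∈ c, j ⁅w, w'⁆ = 0) → w = 0) := by
  classical
  -- The bilinear map `B : c → c*`, `B w = j⁅w, ·⁆|_c`.
  set B : c →ₗ[ℝ] Module.Dual ℝ c :=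
    { toFun := fun w => j ∘ₗ (LieAlgebra.ad ℝ g (w : g) : g →ₗ[ℝ] g) ∘ₗ c.subtype
      map_add' := by
        intro a b
        ext x
        simp [add_lie]
      map_smul' := by
        intro r a
        ext x
        simp [smul_lie] } with hBdef
  have hBapply : ∀ (w w' : c), B w w' = j ⁅(w : g), (w' : g)⁆ := fun w w' => rfl
  -- the projection onto c along gl
  have hdecomp : ∀ x : g, q x ∈ gl ∧ x - q x ∈ c := by
    intro x
    have hx : x ∈ gl ⊔ c := by rw [hcompl.sup_eq_top]; trivial
    rcases Submodule.mem_sup.mp hx with ⟨v, hv, w, hw, rfl⟩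
    have hqx : q (v + w) = v := by rw [map_add, hq1 v hv, hq2 w hw, add_zero]
    rw [hqx]
    constructor
    · exact hv
    · simpa using hw
  have hr : ∀ x : g, x - q x ∈ c := fun x => (hdecomp x).2
  set r : g →ₗ[ℝ] c := (LinearMap.id - q).codRestrict c (by
    intro x; simpa using hr x) with hrdef
  have hrapply : ∀ (x : g), ((r x : g)) = x - q x := fun x => rfl
  have hrc : ∀ w : c, r (w : g) = w := by
    intro w
    apply Subtype.ext
    rw [hrapply, hq2 _ w.2, sub_zero]
  have hfin : Module.finrank ℝ c = Module.finrank ℝ (Module.Dual ℝ c) :=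
    (Subspace.dual_finrank_eq).symm
  constructor
  · rintro ⟨h1, h2⟩ w hw hvan
    -- B is surjective, hence injective, and B ⟨w, hw⟩ = 0
    have hsurj : Function.Surjective B := by
      intro ψ
      obtain ⟨α, β, hα, ⟨w₁, hw₁, hβ⟩, hφ⟩ := h1 (ψ ∘ₗ r)
      refine ⟨⟨w₁, hw₁⟩, ?_⟩
      ext w'
      have hthis : ψ w' = α (w' : g) + j ⁅w₁, (w' : g)⁆ := by
        have := congrArg (fun f : Module.Dual ℝ g => f (w' : g)) hφ
        simpa [hrc, hβ] using this
      rw [hBapply, hthis, hα _ w'.2, zero_add]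
    have hinj : Function.Injective B :=
      (LinearMap.injective_iff_surjective_of_finrank_eq_finrank hfin).mpr hsurj
    have hB0 : B ⟨w, hw⟩ = 0 := by
      ext w'
      exact hvan (w' : g) w'.2
    have : (⟨w, hw⟩ : c) = 0 := hinj (by rw [hB0, map_zero])
    simpa using congrArg Subtype.val this
  · intro hnd
    have hinj : Function.Injective B := by
      intro a b hab
      rw [← sub_eq_zero, ← map_sub] at hab
      have : a - b = 0 := by
        have h := hnd ((a : g) - (b : g)) (by exact sub_mem a.2 b.2)
        have hz : ∀ w' ∈ c, j ⁅(a : g) - (b : g), w'⁆ = 0 := by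
          intro w' hw'
          have := congrArg (fun f : Module.Dual ℝ c => f ⟨w', hw'⟩) hab
          simpa [hBapply] using this
        have := h hz
        exact Subtype.ext (by simpa using this)
      rwa [sub_eq_zero] at this
    have hsurj : Function.Surjective B :=
      (LinearMap.injective_iff_surjective_of_finrank_eq_finrank hfin).mp hinj
    constructor
    · intro φ
      obtain ⟨w₁, hw₁⟩ := hsurj (φ ∘ₗ c.subtype)
      refine ⟨φ - j ∘ₗ (LieAlgebra.ad ℝ g (w₁ : g) : g →ₗ[ℝ] g),
        j ∘ₗ (LieAlgebra.ad ℝ g (w₁ : g) : g →ₗ[ℝ] g), ?_, ⟨(w₁ : g), w₁.2, rfl⟩, by abel⟩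
      intro w' hw'
      have := congrArg (fun f : Module.Dual ℝ c => f ⟨w', hw'⟩) hw₁
      simp only [hBapply] at this
      simp only [LinearMap.sub_apply, LinearMap.coe_comp, Function.comp_apply,
        LieAlgebra.ad_apply]
      rw [sub_eq_zero]
      exact this.symm
    · rintro φ hφc ⟨w, hw, rfl⟩
      have : w = 0 := by
        apply hnd w hw
        intro w' hw'
        simpa [LieAlgebra.ad_apply] using hφc w' hw'
      rw [this]
      ext x
      simp
end

section
/- Let g be a finite-dimensional real Lie algebra and λ ∈ g*. Let c ⊆ g be a subspace with g = g_λ ⊕ c and [g_λ, c] ⊆ c, where g_λ := {v ∈ g : λ([v,w]) = 0 for all w ∈ g}, let q : g → g_λ be the projection with kernel c, and for ξ ∈ g_λ* set j(ξ) := λ + ξ∘q ∈ g*. Identify (g*)* with g and (g_λ*)* with g_λ, let B : g → g* be the linear map B(v) := j(ξ)([v, ·]) and B^λ : g_λ → g_λ* the linear map B^λ(v) := ξ([v, ·]|_{g_λ}). Then the pullback of the Lagrangian graph of B along the transpose map q* : g_λ* → g* equals the graph of B^λ; explicitly, {(u, γ) ∈ g_λ* ⊕ g_λ : there exists β ∈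 g with q(β) = γ and q*(u) = B(β)} = {(B^λ(γ), γ) : γ ∈ g_λ}. -/
/-- Let `g` be a finite-dimensional real Lie algebra, `λ ∈ g*`, `g_λ` the coadjoint
stabilizer of `λ`, `c` an `ad(g_λ)`-invariant complement of `g_λ`, `q : g → g_λ` the
projection with kernel `c`, and `j(ξ) := λ + q*(ξ)`.  Let `B : g → g*` be the
Lie–Poisson bivector at `j(ξ)`, `B(v) := j(ξ)([v,·])`, and `B^λ : g_λ → g_λ*` the
Lie–Poisson bivector at `ξ`, `B^λ(v) := ξ([v,·]|_{g_λ})`.  Then the pullback of the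
graph of `B` along `q* : g_λ* → g*` equals the graph of `B^λ`:
`{(u,γ) : ∃ β, q(β) = γ ∧ q*(u) = B(β)} = {(B^λ(γ), γ) : γ ∈ g_λ}`. -/
theorem slice_poisson_dirac
    {g : Type*} [LieRing g] [LieAlgebra ℝ g] [FiniteDimensional ℝ g]
    (lam : Module.Dual ℝ g)
    (gl c : Submodule ℝ g)
    (hgl : ∀ v : g, v ∈ gl ↔ ∀ w : g, lam ⁅v, w⁆ = 0)
    (hcompl : IsCompl gl c)
    (hinv : ∀ v ∈ gl, ∀ w ∈ c, ⁅v, w⁆ ∈ c)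
    (q : g →ₗ[ℝ] ↥gl)
    (hq1 : ∀ v : ↥gl, q (v : g) = v) (hq2 : ∀ w ∈ c, q w = 0)
    (ξ : Module.Dual ℝ ↥gl)
    (j : Module.Dual ℝ g) (hj : j = lam + ξ ∘ₗ q)
    (B : g →ₗ[ℝ] Module.Dual ℝ g) (hB : ∀ v u : g, B v u = j ⁅v, u⁆)
    (Blam : ↥gl →ₗ[ℝ] Module.Dual ℝ ↥gl)
    (hBlam : ∀ γ γ' : ↥gl, Blam γ γ' = ξ (q ⁅(γ : g), (γ' : g)⁆)) :
    {x : Module.Dual ℝ ↥gl × ↥gl | ∃ β : g, q β = x.2 ∧ q.dualMap x.1 = B β}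
      = {x : Module.Dual ℝ ↥gl × ↥gl | ∃ γ : ↥gl, x = (Blam γ, γ)} := by
  have hdecomp : ∀ w : g, ∃ a : ↥gl, ∃ b ∈ c, w = (a : g) + b := by
    intro w
    obtain ⟨a, ha, b, hb, hab⟩ := Submodule.mem_sup.mp
      (hcompl.sup_eq_top ▸ Submodule.mem_top : w ∈ gl ⊔ c)
    exact ⟨⟨a, ha⟩, b, hb, hab.symm⟩
  ext x
  obtain ⟨u, γ⟩ := x
  simp only [Set.mem_setOf_eq]
  constructor
  · rintro ⟨β, hβ2, hβ1⟩
    refine ⟨γ, ?_⟩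
    obtain ⟨a, b, hb, hab⟩ := hdecomp β
    have hqβ : q β = a := by
      rw [hab, map_add, hq1, hq2 b hb, add_zero]
    have ha' : (γ : ↥gl) = a := by rw [← hqβ, hβ2]
    have hu : u = Blam γ := by
      ext γ'
      have h1 := DFunLike.congr_fun hβ1 (γ' : g)
      rw [LinearMap.dualMap_apply', LinearMap.comp_apply, hq1] at h1
      rw [h1, hB, hj]
      have hlam : lam ⁅β, (γ' : g)⁆ = 0 := by
        have := (hgl (γ' : g)).mp γ'.2 β
        rw [← lie_skew, map_neg, this, neg_zero]
      have hc : q ⁅β, (γ' : g)⁆ = q ⁅(γ : g), (γ' : g)⁆ := by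
        rw [hab, ← ha', add_lie, map_add, hq2 ⁅b, (γ' : g)⁆ ?_, add_zero]
        have := hinv (γ' : g) γ'.2 b hb
        rw [← lie_skew]
        exact Submodule.neg_mem _ this
      simp only [LinearMap.add_apply, LinearMap.comp_apply, hlam, hc, zero_add,
        hBlam]
    rw [hu]
  · rintro ⟨γ0, hx⟩
    injection hx with h1 h2
    subst h1
    subst h2
    refine ⟨(γ : g), hq1 γ, ?_⟩
    ext w
    obtain ⟨a, b, hb, hab⟩ := hdecomp w
    have hqw : q w = a := by rw [hab, map_add, hq1, hq2 b hb, add_zero]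
    have hlam : lam ⁅(γ : g), w⁆ = 0 := (hgl (γ : g)).mp γ.2 w
    have hc : q ⁅(γ : g), w⁆ = q ⁅(γ : g), (a : g)⁆ := by
      rw [hab, lie_add, map_add, hq2 ⁅(γ : g), b⁆ (hinv (γ : g) γ.2 b hb),
        add_zero]
    simp only [LinearMap.dualMap_apply', hqw, hBlam,
      hB, hj, LinearMap.add_apply, LinearMap.comp_apply, hlam, hc, zero_add]
end

section
/- Let G be a group, H ≤ G a subgroup, Y a G-set, T an H-set, and j : T → Y an injective H-equivariant map. Let E := (G × T)/H be the quotient of G × T by the H-action k · (g, t) := (g k⁻¹, k · t), and define ε : E → Y by ε([g, t]) := g · j(t). Then ε is well-defined, and ε is injective if and only if for every g ∈ G, j(T) ∩ (g · j(T)) ≠ ∅ implies g ∈ H. -/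
/-- The equivalence relation on `G × T` whose quotient is `(G × T)/H`, for the
`H`-action `k · (g, t) := (g k⁻¹, k · t)`. -/
def sliceSetoid {G : Type*} [Group G] (H : Subgroup G) (T : Type*) [MulAction H T] :
    Setoid (G × T) where
  r p p' := ∃ k : H, p'.1 = p.1 * (k : G)⁻¹ ∧ p'.2 = k • p.2
  iseqv := by
    refine ⟨?_, ?_, ?_⟩
    · intro p
      exact ⟨1, by simp, by simp⟩
    · rintro p p' ⟨k, h1, h2⟩
      refine ⟨k⁻¹, ?_, ?_⟩
      · simp [h1, mul_assoc]
      · simp [h2]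
    · rintro p p' p'' ⟨k, h1, h2⟩ ⟨k', h1', h2'⟩
      refine ⟨k' * k, ?_, ?_⟩
      · simp [h1', h1, mul_assoc]
      · rw [h2', h2, mul_smul]

/-!
If `g • j t = g' • j t'`, then `g⁻¹ g'` carries a point of `j(T)` into `j(T)`, so the slice
condition puts it in `H`; equivariance and injectivity of `j` then give `t = (g⁻¹ g') • t'`,
which is exactly the relation `[g, t] = [g', t']`. Conversely, `j t = g • j t'` says
`ε [1, t] = ε [g, t']`, and injectivity of `ε` forces `g ∈ H`.
-/

namespace sliceSetoid

variable {G Y T : Type*} [Group G] {H : Subgroup G} [MulAction G Y] [MulAction H T]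

theorem mk_mul_eq (g : G) (k : H) (t : T) :
    Quotient.mk (sliceSetoid H T) (g * k, t) = Quotient.mk (sliceSetoid H T) (g, k • t) :=
  Quotient.sound ⟨k, by simp, rfl⟩

theorem mem_of_mk_one_eq {g : G} {t t' : T}
    (h : Quotient.mk (sliceSetoid H T) (1, t) = Quotient.mk (sliceSetoid H T) (g, t')) :
    g ∈ H := by
  obtain ⟨k, hg, -⟩ := Quotient.exact h
  replace hg : g = 1 * (k : G)⁻¹ := hg
  rw [hg, one_mul]
  exact H.inv_mem k.2

variable (H) in
def molinoExp (j : T → Y) (hequiv : ∀ (k : H) (t : T), j (k • t) = (k : G) • j t) :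
    Quotient (sliceSetoid H T) → Y :=
  Quotient.lift (fun p : G × T => p.1 • j p.2) <| by
    rintro ⟨g, t⟩ ⟨_, _⟩ ⟨k, hg, ht⟩
    simp only at hg ht
    simp [hg, ht, hequiv, smul_smul]

variable {j : T → Y} {hequiv : ∀ (k : H) (t : T), j (k • t) = (k : G) • j t}

@[simp]
theorem molinoExp_mk (g : G) (t : T) :
    molinoExp H j hequiv (Quotient.mk (sliceSetoid H T) (g, t)) = g • j t :=
  rfl

theorem mem_of_molinoExp_injective (hinj : Function.Injective (molinoExp H j hequiv)) {g : G}
    (hg : ∃ t t' : T, j t = g • j t') : g ∈ H := by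
  obtain ⟨t, t', ht⟩ := hg
  exact mem_of_mk_one_eq (hinj (by simpa using ht))

theorem molinoExp_injective (hj : Function.Injective j)
    (hslice : ∀ g : G, (∃ t t' : T, j t = g • j t') → g ∈ H) :
    Function.Injective (molinoExp H j hequiv) := by
  rintro ⟨g, t⟩ ⟨g', t'⟩ h
  replace h : g • j t = g' • j t' := h
  have hjt : j t = (g⁻¹ * g') • j t' := by rw [mul_smul, ← h, inv_smul_smul]
  set k : H := ⟨g⁻¹ * g', hslice _ ⟨t, t', hjt⟩⟩
  have ht : t = k • t' := hj (by rw [hequiv, hjt])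
  calc Quotient.mk (sliceSetoid H T) (g, t)
      = Quotient.mk (sliceSetoid H T) (g * k, t') := by rw [ht, mk_mul_eq]
    _ = Quotient.mk (sliceSetoid H T) (g', t') := by simp [k]

end sliceSetoid

open sliceSetoid in
/-- Let `G` be a group, `H ≤ G`, `Y` a `G`-set, `T` an `H`-set, and `j : T → Y` an
injective `H`-equivariant map.  On `E := (G × T)/H` the map `ε([g,t]) := g · j(t)` is
well-defined, and `ε` is injective if and only if for every `g ∈ G`,
`j(T) ∩ (g · j(T)) ≠ ∅` implies `g ∈ H`. -/
theorem molino_exponential_injective_iff_slice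
    {G Y T : Type*} [Group G] (H : Subgroup G) [MulAction G Y] [MulAction H T]
    (j : T → Y) (hj : Function.Injective j)
    (hequiv : ∀ (k : H) (t : T), j (k • t) = (k : G) • j t) :
    ∃ ε : Quotient (sliceSetoid H T) → Y,
      (∀ (g : G) (t : T), ε (Quotient.mk (sliceSetoid H T) (g, t)) = g • j t) ∧
      (Function.Injective ε ↔
        ∀ g : G, (∃ t t' : T, j t = g • j t') → g ∈ H) :=
  ⟨molinoExp H j hequiv, molinoExp_mk,
    fun hinj _ => mem_of_molinoExp_injective hinj, molinoExp_injective hj⟩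
end

section
/- Let S and V be finite-dimensional real vector spaces, F a skew-symmetric bilinear form on S, and π_v : V* → V a linear map which is skew (β(π_v(α)) = −α(π_v(β)) for all α, β ∈ V*). Set T := S ⊕ V and identify T* = S* ⊕ V*. Define D := {((s, −π_v(α)), (ι_s F, α)) : s ∈ S, α ∈ V*} ⊆ T ⊕ T*, where ι_s F ∈ S* is the covector s' ↦ F(s, s'). Then D is a Lagrangian subspace of T ⊕ T* with respect to the canonical symmetric pairing, and D ∩ ((0 ⊕ V) ⊕ (S* ⊕ 0)) = 0. -/
/-- The canonical symmetric pairing on `T ⊕ T*` for `T := S ⊕ V`, with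
`T* = S* ⊕ V*`. -/
def prodPair {S V : Type*} [AddCommGroup S] [Module ℝ S] [AddCommGroup V] [Module ℝ V]
    (x y : (S × V) × (Module.Dual ℝ S × Module.Dual ℝ V)) : ℝ :=
  (x.2.1 y.1.1 + x.2.2 y.1.2) + (y.2.1 x.1.1 + y.2.2 x.1.2)

/-- A subset of `T ⊕ T*` is Lagrangian if it equals its own orthogonal complement
with respect to the canonical symmetric pairing. -/
def IsLagrangianProd {S V : Type*} [AddCommGroup S] [Module ℝ S]
    [AddCommGroup V] [Module ℝ V]
    (L : Set ((S × V) × (Module.Dual ℝ S × Module.Dual ℝ V))) : Prop :=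
  L = {x | ∀ y ∈ L, prodPair x y = 0}

/-- The linear model `D := {((s, −π_v(α)), (ι_s F, α)) : s ∈ S, α ∈ V*}` of the
coupling Dirac structure. -/
def modelD {S V : Type*} [AddCommGroup S] [Module ℝ S] [AddCommGroup V] [Module ℝ V]
    (F : S →ₗ[ℝ] S →ₗ[ℝ] ℝ) (πv : Module.Dual ℝ V →ₗ[ℝ] V) :
    Set ((S × V) × (Module.Dual ℝ S × Module.Dual ℝ V)) :=
  {x | ∃ (s : S) (α : Module.Dual ℝ V), x = ((s, -πv α), (F s, α))}

/-- For a skew-symmetric bilinear form `F` on `S` and a skew linear map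
`π_v : V* → V`, the set `D = {((s, −π_v(α)), (ι_s F, α))}` is a Lagrangian subspace
of `T ⊕ T*` (`T = S ⊕ V`), and `D ∩ ((0 ⊕ V) ⊕ (S* ⊕ 0)) = 0`. -/
theorem coupling_model_lagrangian
    {S V : Type*} [AddCommGroup S] [Module ℝ S] [FiniteDimensional ℝ S]
    [AddCommGroup V] [Module ℝ V] [FiniteDimensional ℝ V]
    (F : S →ₗ[ℝ] S →ₗ[ℝ] ℝ) (hF : ∀ s s' : S, F s s' = - F s' s)
    (πv : Module.Dual ℝ V →ₗ[ℝ] V)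
    (hπv : ∀ α β : Module.Dual ℝ V, β (πv α) = - α (πv β)) :
    IsLagrangianProd (modelD F πv) ∧
      ∀ x ∈ modelD F πv, x.1.1 = 0 → x.2.2 = 0 → x = 0 := by
  constructor
  · apply Set.eq_of_subset_of_subset
    · rintro x ⟨s, α, rfl⟩ y ⟨s', β, rfl⟩
      simp only [prodPair]
      have h1 := hF s s'
      have h2 := hπv α β
      simp only [map_neg]
      linarith
    · rintro ⟨⟨s, v⟩, ⟨σ, α⟩⟩ hx
      have key : ∀ (s' : S) (β : Module.Dual ℝ V),
          (σ s' + α (-πv β)) + (F s' s + β v) = 0 := by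
        intro s' β
        exact hx ((s', -πv β), (F s', β)) ⟨s', β, rfl⟩
      have hσ : σ = F s := by
        ext s'
        have := key s' 0
        simp at this
        have := hF s' s
        linarith
      have hv : v = -πv α := by
        have hall : ∀ β : Module.Dual ℝ V, β (v + πv α) = 0 := by
          intro β
          have h := key 0 β
          simp at h
          have h2 := hπv α β
          simp [map_add]
          linarith
        have h0 := (Module.forall_dual_apply_eq_zero_iff ℝ (v + πv α)).mp hall
        exact eq_neg_of_add_eq_zero_left h0
      exact ⟨s, α, by simp [hσ, hv]⟩
  · rintro x ⟨s, α, rfl⟩ hs hα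
    simp at hs hα
    subst hs; subst hα
    simp [Prod.ext_iff]
end

section
/- Let S and V be finite-dimensional real vector spaces, F a skew-symmetric bilinear form on S, π_v : V* → V and π_S : S* → S skew linear maps. Set T := S ⊕ V, identify T* = S* ⊕ V*, let r : T → S be the projection r(s, v) := s, and let D := {((s, −π_v(α)), (ι_s F, α)) : s ∈ S, α ∈ V*} ⊆ T ⊕ T*. Then the tangential product of D with the pullback r^!Gr(π_S) is given explicitly by D ⋆ r^!Gr(π_S) = {((π_S(β), −π_v(α)), (β + ι_{π_S(β)} F, α)) : β ∈ S*, α ∈ V*}, where Gr(π_S) := {(π_S(β), β) : β ∈ S*} ⊆ S ⊕ S*, r^!(L) := {(t, r*(β)) : (r(t), β) ∈ L}, and L₁ ⋆ L₂ := {(t, α₁ + α₂) : (t, α₁) ∈ L₁, (t, α₂) ∈ L₂}. -/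
/-- The graph `Gr(π_S) := {(π_S(β), β) : β ∈ S*} ⊆ S ⊕ S*`. -/
def grS {S : Type*} [AddCommGroup S] [Module ℝ S] (πS : Module.Dual ℝ S →ₗ[ℝ] S) :
    Set (S × Module.Dual ℝ S) :=
  {y | ∃ β : Module.Dual ℝ S, y = (πS β, β)}

/-- The pullback `r^!(L) := {(t, r*(β)) : (r(t), β) ∈ L}` along the projection
`r : S ⊕ V → S`, where `r*(β) = (β, 0)`. -/
def rPull {S V : Type*} [AddCommGroup S] [Module ℝ S] [AddCommGroup V] [Module ℝ V]
    (L : Set (S × Module.Dual ℝ S)) :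
    Set ((S × V) × (Module.Dual ℝ S × Module.Dual ℝ V)) :=
  {x | ∃ β : Module.Dual ℝ S, (x.1.1, β) ∈ L ∧ x.2 = (β, 0)}

/-- The tangential product `L₁ ⋆ L₂ := {(t, α₁ + α₂) : (t, α₁) ∈ L₁, (t, α₂) ∈ L₂}`. -/
def tanStar {A B : Type*} [AddCommMonoid B] (L₁ L₂ : Set (A × B)) : Set (A × B) :=
  {x | ∃ (t : A) (a₁ a₂ : B), (t, a₁) ∈ L₁ ∧ (t, a₂) ∈ L₂ ∧ x = (t, a₁ + a₂)}

/-- For skew `F`, `π_v`, `π_S`, the tangential product of the coupling model `D`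
with `r^!Gr(π_S)` is
`D ⋆ r^!Gr(π_S) = {((π_S(β), −π_v(α)), (β + ι_{π_S(β)}F, α)) : β ∈ S*, α ∈ V*}`. -/
theorem coupling_star_pullback_graph
    {S V : Type*} [AddCommGroup S] [Module ℝ S] [FiniteDimensional ℝ S]
    [AddCommGroup V] [Module ℝ V] [FiniteDimensional ℝ V]
    (F : S →ₗ[ℝ] S →ₗ[ℝ] ℝ) (hF : ∀ s s' : S, F s s' = - F s' s)
    (πv : Module.Dual ℝ V →ₗ[ℝ] V)
    (hπv : ∀ α β : Module.Dual ℝ V, β (πv α) = - α (πv β))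
    (πS : Module.Dual ℝ S →ₗ[ℝ] S)
    (hπS : ∀ α β : Module.Dual ℝ S, β (πS α) = - α (πS β)) :
    tanStar (modelD F πv) (rPull (V := V) (grS πS))
      = {x : (S × V) × (Module.Dual ℝ S × Module.Dual ℝ V) |
          ∃ (β : Module.Dual ℝ S) (α : Module.Dual ℝ V),
            x = ((πS β, -πv α), (β + F (πS β), α))} := by
  ext x
  constructor
  · rintro ⟨t, a₁, a₂, ⟨s, α, hs⟩, ⟨β, ⟨β', hβ'⟩, ha₂⟩, rfl⟩
    simp only [Prod.mk.injEq] at hs hβ'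
    obtain ⟨rfl, rfl⟩ := hs
    obtain ⟨h1, rfl⟩ := hβ'
    subst h1
    have h2 : a₂ = (β, 0) := ha₂
    subst h2
    exact ⟨β, α, by simp [Prod.mk_add_mk, add_comm]⟩
  · rintro ⟨β, α, rfl⟩
    exact ⟨(πS β, -πv α), (F (πS β), α), (β, 0),
      ⟨πS β, α, rfl⟩, ⟨β, ⟨β, rfl⟩, rfl⟩,
      by simp [Prod.mk_add_mk, add_comm]⟩
end
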